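/- Prediction-step consistency: suppose ê = X̂ - X satisfies E[ê ê^T] ≤ P, the new state is X⁺ = A X + D u + ω with E[ω ω^T] ≤ Q, ω uncorrelated with ê and with u - û, and the prediction is X̄ = A X̂ + D û where E[(u - û)(u - û)^T] ≤ S. Then for any θ > 0, the prediction error ē = X̄ - X⁺ satisfies E[ē ē^T] ≤ (1+θ) A P A^T + (1 + 1/θ) D S D^T + Q. -/

import Mathlib

/-
The prediction error is `ē = A ê - D (u - û) - ω`. Testing the claimed Loewner inequality
against a vector `x` turns it into a scalar one for `α = (xᵀA)·ê`, `β = (xᵀD)·(u - û)`,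
`γ = xᵀω`: since `γ` is uncorrelated with `α` and `β`,
`E[(α - β - γ)²] = E[(α - β)²] + E[γ²]`, and the weighted Young inequality
`(α - β)² ≤ (1 + θ) α² + (1 + θ⁻¹) β²` holds pointwise. The hypotheses bound
`E[α²]`, `E[β²]`, `E[γ²]` by the quadratic forms of `A P Aᵀ`, `D S Dᵀ`, `Q`.
-/

open Matrix MeasureTheory

/-- Entrywise expectation of the outer product `X Yᵀ` of two random vectors. -/
noncomputable def Eouter {Ω : Type*} [MeasurableSpace Ω] (μ : Measure Ω) {n m : ℕ}
    (X : Ω → Fin n → ℝ) (Y : Ω → Fin m → ℝ) : Matrix (Fin n) (Fin m) ℝ :=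
  Matrix.of fun i j => ∫ ω, X ω i * Y ω j ∂μ

lemma sub_sq_le_young (a b : ℝ) {θ : ℝ} (hθ : 0 < θ) :
    (a - b) ^ 2 ≤ (1 + θ) * a ^ 2 + (1 + θ⁻¹) * b ^ 2 := by
  have hgap : (1 + θ) * a ^ 2 + (1 + θ⁻¹) * b ^ 2 - (a - b) ^ 2 = (θ * a + b) ^ 2 / θ := by
    field_simp
    ring
  have : 0 ≤ (θ * a + b) ^ 2 / θ := by positivity
  linarith

lemma dotProduct_mul_mul_transpose_mulVec {ι κ R : Type*} [Fintype ι] [Fintype κ]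
    [CommSemiring R] (A : Matrix ι κ R) (P : Matrix κ κ R) (x : ι → R) :
    x ⬝ᵥ (A * P * Aᵀ) *ᵥ x = (x ᵥ* A) ⬝ᵥ P *ᵥ (x ᵥ* A) := by
  rw [← mulVec_mulVec, ← mulVec_mulVec, dotProduct_mulVec, mulVec_transpose]

lemma isHermitian_mul_mul_transpose {ι κ R : Type*} [Fintype κ] [CommSemiring R] [StarRing R]
    [TrivialStar R] {P : Matrix κ κ R} (hP : P.IsHermitian) (A : Matrix ι κ R) :
    (A * P * Aᵀ).IsHermitian := by
  simpa only [conjTranspose_eq_transpose_of_trivial] using isHermitian_mul_mul_conjTranspose A hP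

section SecondMoment

variable {Ω : Type*} [MeasurableSpace Ω] {μ : Measure Ω}

lemma memLp_dotProduct {ι : Type*} [Fintype ι] {p : ENNReal} {Z : Ω → ι → ℝ}
    (hZ : ∀ i, MemLp (fun ω => Z ω i) p μ) (x : ι → ℝ) :
    MemLp (fun ω => x ⬝ᵥ Z ω) p μ :=
  memLp_finsetSum _ fun i _ => (hZ i).const_mul (x i)

lemma memLp_mulVec {ι κ : Type*} [Fintype κ] {p : ENNReal} {Z : Ω → κ → ℝ}
    (hZ : ∀ i, MemLp (fun ω => Z ω i) p μ) (M : Matrix ι κ ℝ) (i : ι) :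
    MemLp (fun ω => (M *ᵥ Z ω) i) p μ :=
  memLp_dotProduct hZ (M i)

lemma integral_sq_sub_sub_le {a b c : Ω → ℝ} (ha : MemLp a 2 μ) (hb : MemLp b 2 μ)
    (hc : MemLp c 2 μ) (hca : ∫ ω, c ω * a ω ∂μ = 0) (hcb : ∫ ω, c ω * b ω ∂μ = 0)
    {θ : ℝ} (hθ : 0 < θ) :
    ∫ ω, (a ω - b ω - c ω) ^ 2 ∂μ ≤
      (1 + θ) * ∫ ω, a ω ^ 2 ∂μ + (1 + θ⁻¹) * ∫ ω, b ω ^ 2 ∂μ + ∫ ω, c ω ^ 2 ∂μ := by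
  have hA := ha.integrable_sq.const_mul (1 + θ)
  have hB := hb.integrable_sq.const_mul (1 + θ⁻¹)
  have hC := hc.integrable_sq
  have hCA : Integrable (fun ω => 2 * (c ω * a ω)) μ := (hc.integrable_mul ha).const_mul 2
  have hCB : Integrable (fun ω => 2 * (c ω * b ω)) μ := (hc.integrable_mul hb).const_mul 2
  calc ∫ ω, (a ω - b ω - c ω) ^ 2 ∂μ
      ≤ ∫ ω, (1 + θ) * a ω ^ 2 + (1 + θ⁻¹) * b ω ^ 2 + c ω ^ 2
          - 2 * (c ω * a ω) + 2 * (c ω * b ω) ∂μ := by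
        refine integral_mono ((ha.sub hb).sub hc).integrable_sq
          ((((hA.fun_add hB).fun_add hC).sub' hCA).fun_add hCB) fun ω => ?_
        have := sub_sq_le_young (a ω) (b ω) hθ
        nlinarith
    _ = _ := by
        rw [integral_add (((hA.fun_add hB).fun_add hC).sub' hCA) hCB,
          integral_sub ((hA.fun_add hB).fun_add hC) hCA, integral_add (hA.fun_add hB) hC,
          integral_add hA hB]
        simp only [integral_const_mul, hca, hcb]
        ring

variable {n m : ℕ}

lemma dotProduct_Eouter_mulVec {Z : Ω → Fin n → ℝ} {W : Ω → Fin m → ℝ}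
    (hZ : ∀ i, MemLp (fun ω => Z ω i) 2 μ) (hW : ∀ j, MemLp (fun ω => W ω j) 2 μ)
    (x : Fin n → ℝ) (y : Fin m → ℝ) :
    x ⬝ᵥ Eouter μ Z W *ᵥ y = ∫ ω, (x ⬝ᵥ Z ω) * (y ⬝ᵥ W ω) ∂μ := by
  have hint : ∀ i j, Integrable (fun ω => x i * Z ω i * (y j * W ω j)) μ := fun i j =>
    ((hZ i).const_mul (x i)).integrable_mul ((hW j).const_mul (y j))
  simp only [dotProduct, mulVec, Eouter, of_apply, Finset.sum_mul_sum]
  rw [integral_finsetSum _ fun i _ => integrable_finsetSum _ fun j _ => hint i j]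
  refine Finset.sum_congr rfl fun i _ => ?_
  rw [integral_finsetSum _ fun j _ => hint i j, Finset.mul_sum]
  refine Finset.sum_congr rfl fun j _ => ?_
  rw [← integral_mul_const, ← integral_const_mul]
  congr 1 with ω
  ring

lemma isHermitian_Eouter_self (Z : Ω → Fin n → ℝ) : (Eouter μ Z Z).IsHermitian := by
  ext i j
  simp [Eouter, mul_comm]

lemma integral_sq_dotProduct_le_of_posSemidef_sub {Z : Ω → Fin n → ℝ}
    (hZ : ∀ i, MemLp (fun ω => Z ω i) 2 μ) {P : Matrix (Fin n) (Fin n) ℝ}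
    (hP : (P - Eouter μ Z Z).PosSemidef) (x : Fin n → ℝ) :
    ∫ ω, (x ⬝ᵥ Z ω) ^ 2 ∂μ ≤ x ⬝ᵥ P *ᵥ x := by
  have := hP.dotProduct_mulVec_nonneg x
  rw [star_trivial, sub_mulVec, dotProduct_sub, dotProduct_Eouter_mulVec hZ hZ] at this
  simpa only [sq, sub_nonneg] using this

lemma integral_mul_dotProduct_eq_zero {Z : Ω → Fin n → ℝ} {W : Ω → Fin m → ℝ}
    (hZ : ∀ i, MemLp (fun ω => Z ω i) 2 μ) (hW : ∀ j, MemLp (fun ω => W ω j) 2 μ)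
    (hZW : Eouter μ Z W = 0) (x : Fin n → ℝ) (y : Fin m → ℝ) :
    ∫ ω, (x ⬝ᵥ Z ω) * (y ⬝ᵥ W ω) ∂μ = 0 := by
  rw [← dotProduct_Eouter_mulVec hZ hW, hZW, zero_mulVec, dotProduct_zero]

lemma integral_sq_dotProduct_sub_sub_le {k p : ℕ} {e : Ω → Fin k → ℝ} {v : Ω → Fin p → ℝ}
    {w : Ω → Fin n → ℝ} (he : ∀ i, MemLp (fun ω => e ω i) 2 μ)
    (hv : ∀ i, MemLp (fun ω => v ω i) 2 μ) (hw : ∀ i, MemLp (fun ω => w ω i) 2 μ)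
    {A : Matrix (Fin n) (Fin k) ℝ} {D : Matrix (Fin n) (Fin p) ℝ} {P : Matrix (Fin k) (Fin k) ℝ}
    {S : Matrix (Fin p) (Fin p) ℝ} {Q : Matrix (Fin n) (Fin n) ℝ}
    (hP : (P - Eouter μ e e).PosSemidef) (hS : (S - Eouter μ v v).PosSemidef)
    (hQ : (Q - Eouter μ w w).PosSemidef) (hwe : Eouter μ w e = 0) (hwv : Eouter μ w v = 0)
    {θ : ℝ} (hθ : 0 < θ) (x : Fin n → ℝ) :
    ∫ ω, (x ⬝ᵥ (A *ᵥ e ω - D *ᵥ v ω - w ω)) ^ 2 ∂μ ≤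
      (1 + θ) * ((x ᵥ* A) ⬝ᵥ P *ᵥ (x ᵥ* A)) + (1 + θ⁻¹) * ((x ᵥ* D) ⬝ᵥ S *ᵥ (x ᵥ* D))
        + x ⬝ᵥ Q *ᵥ x := by
  have hsplit := integral_sq_sub_sub_le (memLp_dotProduct he (x ᵥ* A))
    (memLp_dotProduct hv (x ᵥ* D)) (memLp_dotProduct hw x)
    (integral_mul_dotProduct_eq_zero hw he hwe _ _)
    (integral_mul_dotProduct_eq_zero hw hv hwv _ _) hθ
  have hPx := mul_le_mul_of_nonneg_left
    (integral_sq_dotProduct_le_of_posSemidef_sub he hP (x ᵥ* A)) (by positivity : 0 ≤ 1 + θ)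
  have hSx := mul_le_mul_of_nonneg_left
    (integral_sq_dotProduct_le_of_posSemidef_sub hv hS (x ᵥ* D)) (by positivity : 0 ≤ 1 + θ⁻¹)
  have hQx := integral_sq_dotProduct_le_of_posSemidef_sub hw hQ x
  simp only [dotProduct_sub, dotProduct_mulVec x A, dotProduct_mulVec x D]
  linarith

end SecondMoment

/-- Prediction-step consistency: if `E[ê êᵀ] ≤ P` for `ê = X̂ - X`, the new state
is `X⁺ = A X + D u + ω₀` with `E[ω₀ ω₀ᵀ] ≤ Q`, `ω₀` uncorrelated with `ê` and
with `u - û`, `E[(u-û)(u-û)ᵀ] ≤ S`, and the prediction is `X̄ = A X̂ + D û`,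
then for any `θ > 0` the prediction error `ē = X̄ - X⁺` satisfies
`E[ē ēᵀ] ≤ (1+θ) A P Aᵀ + (1 + 1/θ) D S Dᵀ + Q`. -/
theorem prediction_step_consistent {Ω : Type*} [MeasurableSpace Ω]
    (μ : Measure Ω) [IsProbabilityMeasure μ] {n p : ℕ}
    (X Xhat w : Ω → Fin n → ℝ) (u : Ω → Fin p → ℝ) (uhat : Fin p → ℝ)
    (hX : ∀ i, MemLp (fun ω => X ω i) 2 μ)
    (hXhat : ∀ i, MemLp (fun ω => Xhat ω i) 2 μ)
    (hw : ∀ i, MemLp (fun ω => w ω i) 2 μ)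
    (hu : ∀ j, MemLp (fun ω => u ω j) 2 μ)
    (A : Matrix (Fin n) (Fin n) ℝ) (D : Matrix (Fin n) (Fin p) ℝ)
    (P Q : Matrix (Fin n) (Fin n) ℝ) (S : Matrix (Fin p) (Fin p) ℝ)
    (hP : P.PosSemidef) (hQ : Q.PosSemidef) (hS : S.PosSemidef)
    (hcons : (P - Eouter μ (fun ω => Xhat ω - X ω)
                (fun ω => Xhat ω - X ω)).PosSemidef)
    (hQw : (Q - Eouter μ w w).PosSemidef)
    (hSu : (S - Eouter μ (fun ω => u ω - uhat)
              (fun ω => u ω - uhat)).PosSemidef)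
    (hwe : Eouter μ w (fun ω => Xhat ω - X ω) = 0)
    (hwu : Eouter μ w (fun ω => u ω - uhat) = 0)
    (θ : ℝ) (hθ : 0 < θ) :
    (((1 + θ) • (A * P * Aᵀ) + (1 + θ⁻¹) • (D * S * Dᵀ) + Q)
      - Eouter μ
          (fun ω => (A.mulVec (Xhat ω) + D.mulVec uhat)
            - (A.mulVec (X ω) + D.mulVec (u ω) + w ω))
          (fun ω => (A.mulVec (Xhat ω) + D.mulVec uhat)
            - (A.mulVec (X ω) + D.mulVec (u ω) + w ω))).PosSemidef := by
  set e : Ω → Fin n → ℝ := fun ω => Xhat ω - X ω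
  set v : Ω → Fin p → ℝ := fun ω => u ω - uhat
  have he : ∀ i, MemLp (fun ω => e ω i) 2 μ := fun i => (hXhat i).sub (hX i)
  have hv : ∀ j, MemLp (fun ω => v ω j) 2 μ := fun j => (hu j).sub (memLp_const _)
  have herr : (fun ω => (A *ᵥ Xhat ω + D *ᵥ uhat) - (A *ᵥ X ω + D *ᵥ u ω + w ω))
      = fun ω => A *ᵥ e ω - D *ᵥ v ω - w ω := by
    funext ω
    simp only [e, v, mulVec_sub]
    abel
  have herr_memLp : ∀ i, MemLp (fun ω => (A *ᵥ e ω - D *ᵥ v ω - w ω) i) 2 μ := fun i =>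
    ((memLp_mulVec he A i).sub (memLp_mulVec hv D i)).sub (hw i)
  rw [herr]
  refine .of_dotProduct_mulVec_nonneg ?_ fun x => ?_
  · exact ((((isHermitian_mul_mul_transpose hP.1 A).smul (.all _)).add
      ((isHermitian_mul_mul_transpose hS.1 D).smul (.all _))).add hQ.1).sub
      (isHermitian_Eouter_self _)
  rw [star_trivial, sub_mulVec, add_mulVec, add_mulVec, smul_mulVec, smul_mulVec,
    dotProduct_sub, dotProduct_add, dotProduct_add, dotProduct_smul, dotProduct_smul,
    smul_eq_mul, smul_eq_mul, dotProduct_mul_mul_transpose_mulVec,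
    dotProduct_mul_mul_transpose_mulVec, dotProduct_Eouter_mulVec herr_memLp herr_memLp,
    sub_nonneg]
  simpa only [sq] using
    integral_sq_dotProduct_sub_sub_le he hv hw hcons hSu hQw hwe hwu hθ x
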